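/- Let $\nu \in (0,1)$ and let $F_1, F_2, G_1, G_2 : [0,\infty) \to \mathbb{C}$ be twice continuously differentiable with $F_2'(0) = G_2'(0) = 0$. Define $f(z) = z^{\nu+1/2} F_1(z) + z^{-\nu+1/2} F_2(z)$ and $g(z) = z^{\nu+1/2} G_1(z) + z^{-\nu+1/2} G_2(z)$ for $z > 0$. Then the Wronskian $f(z)g'(z) - f'(z)g(z)$ has a limit as $z \to 0^+$, and $\lim_{z\to 0^+}\big(f(z)g'(z) - f'(z)g(z)\big) = 2\nu\,\big(F_2(0)G_1(0) - F_1(0)G_2(0)\big)$. In particular, if the leading coefficient vectors are proportional, i.e. $F_1(0)G_2(0) = F_2(0)G_1(0)$ (as happens when $f$ and $g$ obey the same $\alpha$-boundary condition at $z=0$), then the boundary term $\lim_{z\to 0^+} W_z[f,g]$ vanishes. -/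

import Mathlib

open Real Filter Topology

/-! With `U = z^(ν+1/2)` and `V = z^(1/2-ν)`, the Wronskian is bilinear and satisfies
`W[aF, bG] = ab W[F,G] + FG W[a,b]`, so
`W[f,g] = U² W[F₁,G₁] + UV (W[F₁,G₂] + W[F₂,G₁]) + V² W[F₂,G₂] + W[U,V] (F₁G₂ - F₂G₁)`
with `U² = z^(2ν+1)`, `UV = z`, `V² = z^(1-2ν)` and `W[U,V] = -2ν`. The first two terms tend
to `0` because the powers do and the Wronskians of `C¹` functions are continuous. The singular
term `V² W[F₂,G₂]` is harmless because `W[F₂,G₂]` is differentiable and vanishes at `0`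
(as `F₂'(0) = G₂'(0) = 0`), so it is `O(z)`, and `z^(2-2ν) → 0` for `ν < 1`. -/

section Wronskian

variable {𝕜 : Type*} [NontriviallyNormedField 𝕜] {𝔸 : Type*} [NormedCommRing 𝔸]
  [NormedAlgebra 𝕜 𝔸]

noncomputable def wronskian (f g : 𝕜 → 𝔸) (x : 𝕜) : 𝔸 := f x * deriv g x - deriv f x * g x

theorem Filter.EventuallyEq.wronskian_eq {f₁ f₂ g₁ g₂ : 𝕜 → 𝔸} {x : 𝕜}
    (hf : f₁ =ᶠ[𝓝 x] f₂) (hg : g₁ =ᶠ[𝓝 x] g₂) : wronskian f₁ g₁ x = wronskian f₂ g₂ x := by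
  rw [wronskian, wronskian, hf.eq_of_nhds, hg.eq_of_nhds, hf.deriv_eq, hg.deriv_eq]

theorem wronskian_add_mul_add_mul {a b F₁ F₂ G₁ G₂ : 𝕜 → 𝔸} {x : 𝕜}
    (ha : DifferentiableAt 𝕜 a x) (hb : DifferentiableAt 𝕜 b x)
    (hF₁ : DifferentiableAt 𝕜 F₁ x) (hF₂ : DifferentiableAt 𝕜 F₂ x)
    (hG₁ : DifferentiableAt 𝕜 G₁ x) (hG₂ : DifferentiableAt 𝕜 G₂ x) :
    wronskian (fun y => a y * F₁ y + b y * F₂ y) (fun y => a y * G₁ y + b y * G₂ y) x =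
      a x ^ 2 * wronskian F₁ G₁ x + a x * b x * (wronskian F₁ G₂ x + wronskian F₂ G₁ x)
        + b x ^ 2 * wronskian F₂ G₂ x + wronskian a b x * (F₁ x * G₂ x - F₂ x * G₁ x) := by
  have hf : deriv (fun y => a y * F₁ y + b y * F₂ y) x = _ :=
    ((ha.hasDerivAt.mul hF₁.hasDerivAt).add (hb.hasDerivAt.mul hF₂.hasDerivAt)).deriv
  have hg : deriv (fun y => a y * G₁ y + b y * G₂ y) x = _ :=
    ((ha.hasDerivAt.mul hG₁.hasDerivAt).add (hb.hasDerivAt.mul hG₂.hasDerivAt)).deriv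
  simp only [wronskian, hf, hg]
  ring

theorem ContDiff.continuous_wronskian {f g : 𝕜 → 𝔸} (hf : ContDiff 𝕜 1 f) (hg : ContDiff 𝕜 1 g) :
    Continuous (wronskian f g) :=
  (hf.continuous.mul (hg.continuous_deriv le_rfl)).sub
    ((hf.continuous_deriv le_rfl).mul hg.continuous)

theorem ContDiff.differentiable_wronskian {f g : 𝕜 → 𝔸} (hf : ContDiff 𝕜 2 f)
    (hg : ContDiff 𝕜 2 g) : Differentiable 𝕜 (wronskian f g) :=
  have hf' : ContDiff 𝕜 1 (deriv f) := hf.deriv'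
  have hg' : ContDiff 𝕜 1 (deriv g) := hg.deriv'
  ((hf.differentiable two_ne_zero).mul (hg'.differentiable one_ne_zero)).sub
    ((hf'.differentiable one_ne_zero).mul (hg.differentiable two_ne_zero))

end Wronskian

theorem hasDerivAt_ofReal_rpow_const {p x : ℝ} (hx : x ≠ 0) :
    HasDerivAt (fun y : ℝ => ((y ^ p : ℝ) : ℂ)) ((p * x ^ (p - 1) : ℝ) : ℂ) x :=
  (hasDerivAt_rpow_const (Or.inl hx)).ofReal_comp

theorem wronskian_ofReal_rpow {p q x : ℝ} (hx : 0 < x) :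
    wronskian (fun y : ℝ => ((y ^ p : ℝ) : ℂ)) (fun y : ℝ => ((y ^ q : ℝ) : ℂ)) x =
      ((q - p) * x ^ (p + q - 1) : ℝ) := by
  have hpq : x ^ p * x ^ (q - 1) = x ^ (p + q - 1) := by rw [← rpow_add hx]; ring_nf
  have hqp : x ^ (p - 1) * x ^ q = x ^ (p + q - 1) := by rw [← rpow_add hx]; ring_nf
  rw [wronskian, (hasDerivAt_ofReal_rpow_const hx.ne').deriv,
    (hasDerivAt_ofReal_rpow_const hx.ne').deriv]
  exact_mod_cast (by linear_combination q * hpq - p * hqp :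
    x ^ p * (q * x ^ (q - 1)) - p * x ^ (p - 1) * x ^ q = (q - p) * x ^ (p + q - 1))

theorem tendsto_ofReal_rpow_nhdsGT_zero {s : ℝ} (hs : 0 < s) :
    Tendsto (fun z : ℝ => ((z ^ s : ℝ) : ℂ)) (𝓝[>] 0) (𝓝 0) := by
  have h := (continuousAt_rpow_const 0 s (Or.inr hs.le)).tendsto.ofReal
  rw [zero_rpow hs.ne', Complex.ofReal_zero] at h
  exact h.mono_left nhdsWithin_le_nhds

theorem tendsto_ofReal_rpow_mul_nhdsGT_zero {s : ℝ} (hs : -1 < s) {φ : ℝ → ℂ}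
    (hφ : DifferentiableAt ℝ φ 0) (hφ₀ : φ 0 = 0) :
    Tendsto (fun z : ℝ => ((z ^ s : ℝ) : ℂ) * φ z) (𝓝[>] 0) (𝓝 0) := by
  -- `z^s φ(z) = z^(s+1) · slope φ 0 z`
  have hslope : Tendsto (slope φ 0) (𝓝[>] 0) (𝓝 (deriv φ 0)) :=
    (hasDerivAt_iff_tendsto_slope.mp hφ.hasDerivAt).mono_left
      (nhdsWithin_mono 0 fun _ hz => ne_of_gt hz)
  have h := (tendsto_ofReal_rpow_nhdsGT_zero (by linarith : 0 < s + 1)).mul hslope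
  rw [zero_mul] at h
  refine h.congr' ?_
  filter_upwards [self_mem_nhdsWithin] with z (hz : 0 < z)
  rw [slope_def_module, hφ₀, sub_zero, sub_zero, Complex.real_smul, rpow_add_one hz.ne']
  have hz' : (z : ℂ) ≠ 0 := Complex.ofReal_ne_zero.mpr hz.ne'
  push_cast
  field_simp

noncomputable def frobeniusSum (ν : ℝ) (F₁ F₂ : ℝ → ℂ) (z : ℝ) : ℂ :=
  ((z ^ (ν + 1 / 2) : ℝ) : ℂ) * F₁ z + ((z ^ (-ν + 1 / 2) : ℝ) : ℂ) * F₂ z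

theorem wronskian_frobeniusSum {ν z : ℝ} (hz : 0 < z) {F₁ F₂ G₁ G₂ : ℝ → ℂ}
    (hF₁ : DifferentiableAt ℝ F₁ z) (hF₂ : DifferentiableAt ℝ F₂ z)
    (hG₁ : DifferentiableAt ℝ G₁ z) (hG₂ : DifferentiableAt ℝ G₂ z) :
    wronskian (frobeniusSum ν F₁ F₂) (frobeniusSum ν G₁ G₂) z =
      ((z ^ (2 * ν + 1) : ℝ) : ℂ) * wronskian F₁ G₁ z
        + (z : ℂ) * (wronskian F₁ G₂ z + wronskian F₂ G₁ z)
        + ((z ^ (1 - 2 * ν) : ℝ) : ℂ) * wronskian F₂ G₂ z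
        + ((2 * ν : ℝ) : ℂ) * (F₂ z * G₁ z - F₁ z * G₂ z) := by
  have hsq : ∀ p : ℝ, ((z ^ p : ℝ) : ℂ) ^ 2 = ((z ^ (2 * p) : ℝ) : ℂ) := fun p => by
    rw [← Complex.ofReal_pow, ← rpow_natCast, ← rpow_mul hz.le, mul_comm]; norm_num
  have hprod : ((z ^ (ν + 1 / 2) : ℝ) : ℂ) * ((z ^ (-ν + 1 / 2) : ℝ) : ℂ) = z := by
    rw [← Complex.ofReal_mul, ← rpow_add hz, show ν + 1 / 2 + (-ν + 1 / 2) = 1 by ring, rpow_one]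
  unfold frobeniusSum
  rw [wronskian_add_mul_add_mul (hasDerivAt_ofReal_rpow_const hz.ne').differentiableAt
    (hasDerivAt_ofReal_rpow_const hz.ne').differentiableAt hF₁ hF₂ hG₁ hG₂,
    wronskian_ofReal_rpow hz, hsq, hsq, hprod, show 2 * (ν + 1 / 2) = 2 * ν + 1 by ring,
    show 2 * (-ν + 1 / 2) = 1 - 2 * ν by ring, show ν + 1 / 2 + (-ν + 1 / 2) - 1 = 0 by ring,
    rpow_zero]
  push_cast
  ring

theorem tendsto_wronskian_frobeniusSum {ν : ℝ} (hν₀ : -(1 / 2) < ν) (hν₁ : ν < 1)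
    {F₁ F₂ G₁ G₂ : ℝ → ℂ} (hF₁ : ContDiff ℝ 1 F₁) (hF₂ : ContDiff ℝ 2 F₂)
    (hG₁ : ContDiff ℝ 1 G₁) (hG₂ : ContDiff ℝ 2 G₂) (hW₂₂ : wronskian F₂ G₂ 0 = 0) :
    Tendsto (wronskian (frobeniusSum ν F₁ F₂) (frobeniusSum ν G₁ G₂)) (𝓝[>] 0)
      (𝓝 (((2 * ν : ℝ) : ℂ) * (F₂ 0 * G₁ 0 - F₁ 0 * G₂ 0))) := by
  have hF₂' : ContDiff ℝ 1 F₂ := hF₂.of_le one_le_two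
  have hG₂' : ContDiff ℝ 1 G₂ := hG₂.of_le one_le_two
  have hcont : ∀ {φ : ℝ → ℂ}, Continuous φ → Tendsto φ (𝓝[>] 0) (𝓝 (φ 0)) :=
    fun hφ => hφ.continuousAt.tendsto.mono_left nhdsWithin_le_nhds
  have h₁₁ : Tendsto (fun z : ℝ => ((z ^ (2 * ν + 1) : ℝ) : ℂ) * wronskian F₁ G₁ z)
      (𝓝[>] 0) (𝓝 0) := by
    simpa using (tendsto_ofReal_rpow_nhdsGT_zero (by linarith)).mul
      (hcont (hF₁.continuous_wronskian hG₁))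
  have hmixed : Tendsto (fun z : ℝ => (z : ℂ) * (wronskian F₁ G₂ z + wronskian F₂ G₁ z))
      (𝓝[>] 0) (𝓝 0) := by
    have hc : Continuous fun z : ℝ => (z : ℂ) * (wronskian F₁ G₂ z + wronskian F₂ G₁ z) :=
      Complex.continuous_ofReal.mul
        ((hF₁.continuous_wronskian hG₂').add (hF₂'.continuous_wronskian hG₁))
    simpa using hcont hc
  have h₂₂ : Tendsto (fun z : ℝ => ((z ^ (1 - 2 * ν) : ℝ) : ℂ) * wronskian F₂ G₂ z)
      (𝓝[>] 0) (𝓝 0) :=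
    tendsto_ofReal_rpow_mul_nhdsGT_zero (by linarith)
      ((hF₂.differentiable_wronskian hG₂) 0) hW₂₂
  have hlead : Tendsto (fun z : ℝ => ((2 * ν : ℝ) : ℂ) * (F₂ z * G₁ z - F₁ z * G₂ z))
      (𝓝[>] 0) (𝓝 (((2 * ν : ℝ) : ℂ) * (F₂ 0 * G₁ 0 - F₁ 0 * G₂ 0))) :=
    hcont (continuous_const.mul ((hF₂.continuous.mul hG₁.continuous).sub
      (hF₁.continuous.mul hG₂.continuous)))
  have hsum := ((h₁₁.add hmixed).add h₂₂).add hlead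
  rw [zero_add, zero_add, zero_add] at hsum
  refine hsum.congr' ?_
  filter_upwards [self_mem_nhdsWithin] with z (hz : 0 < z)
  exact (wronskian_frobeniusSum hz (hF₁.differentiable one_ne_zero z)
    (hF₂'.differentiable one_ne_zero z) (hG₁.differentiable one_ne_zero z)
    (hG₂'.differentiable one_ne_zero z)).symm

/-- For `ν ∈ (0,1)` and functions `f = z^{ν+1/2}F₁ + z^{-ν+1/2}F₂`,
`g = z^{ν+1/2}G₁ + z^{-ν+1/2}G₂` with `F₁,F₂,G₁,G₂` twice continuously differentiable up to
the boundary and `F₂'(0) = G₂'(0) = 0`, the Wronskian `f g' - f' g` has a limit as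
`z → 0⁺`, equal to `2ν (F₂(0)G₁(0) - F₁(0)G₂(0))`. In particular it vanishes when
`F₁(0)G₂(0) = F₂(0)G₁(0)` (e.g. for a common `α`-boundary condition). -/
theorem boundary_wronskian_limit (ν : ℝ) (hν : 0 < ν ∧ ν < 1)
    (F₁ F₂ G₁ G₂ : ℝ → ℂ)
    (hF₁ : ContDiff ℝ 2 F₁) (hF₂ : ContDiff ℝ 2 F₂)
    (hG₁ : ContDiff ℝ 2 G₁) (hG₂ : ContDiff ℝ 2 G₂)
    (hF₂' : deriv F₂ 0 = 0) (hG₂' : deriv G₂ 0 = 0)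
    (f g : ℝ → ℂ)
    (hf : ∀ z : ℝ, 0 < z →
      f z = ((z ^ (ν + 1 / 2) : ℝ) : ℂ) * F₁ z + ((z ^ (-ν + 1 / 2) : ℝ) : ℂ) * F₂ z)
    (hg : ∀ z : ℝ, 0 < z →
      g z = ((z ^ (ν + 1 / 2) : ℝ) : ℂ) * G₁ z + ((z ^ (-ν + 1 / 2) : ℝ) : ℂ) * G₂ z) :
    Tendsto (fun z => f z * deriv g z - deriv f z * g z)
        (nhdsWithin 0 (Set.Ioi 0))
        (nhds (((2 * ν : ℝ) : ℂ) * (F₂ 0 * G₁ 0 - F₁ 0 * G₂ 0)))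
      ∧ (F₁ 0 * G₂ 0 = F₂ 0 * G₁ 0 →
          Tendsto (fun z => f z * deriv g z - deriv f z * g z)
            (nhdsWithin 0 (Set.Ioi 0)) (nhds 0)) := by
  have hW₂₂ : wronskian F₂ G₂ 0 = 0 := by simp [wronskian, hF₂', hG₂']
  have hfg : wronskian (frobeniusSum ν F₁ F₂) (frobeniusSum ν G₁ G₂) =ᶠ[𝓝[>] 0]
      wronskian f g := by
    filter_upwards [self_mem_nhdsWithin] with z (hz : 0 < z)
    exact (EventuallyEq.wronskian_eq (eventually_of_mem (Ioi_mem_nhds hz) hf)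
      (eventually_of_mem (Ioi_mem_nhds hz) hg)).symm
  have hlim := (tendsto_wronskian_frobeniusSum (by linarith [hν.1]) hν.2 (hF₁.of_le one_le_two) hF₂
    (hG₁.of_le one_le_two) hG₂ hW₂₂).congr' hfg
  refine ⟨hlim, fun h => ?_⟩
  rwa [sub_eq_zero.mpr h.symm, mul_zero] at hlim
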